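/- arXiv:1712.06031 — 3 statements merged into one kernel-verified Lean document; each statement's English description precedes it below -/
import Mathlib

section
/- Let H(s) be a rational function of the form H(s) = C(sE - A)^{-1}B for matrices E, A ∈ ℂ^{n×n}, B ∈ ℂ^{n×1}, C ∈ ℂ^{1×n}. Given distinct right interpolation points λ_1,...,λ_ρ and left interpolation points μ_1,...,μ_ν (all distinct from each other and such that all resolvents exist), define w_i = H(λ_i), v_j = H(μ_j), the generalized reachability matrix R = [(λ_1 E - A)^{-1}B, ..., (λ_ρ E - A)^{-1}B] and observability matrix O with rows C(μ_j E - A)^{-1}. Then the Loewner matrix L with entries L_{ji} = (v_j - w_i)/(μ_j - λ_i) satisfies L = -O E R. -/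
open Matrix

/-- Loewner matrix factorization: `L = -O * E * R`. -/
theorem loewner_factorization (n ρ ν : ℕ)
    (E A : Matrix (Fin n) (Fin n) ℂ)
    (B : Matrix (Fin n) (Fin 1) ℂ) (C : Matrix (Fin 1) (Fin n) ℂ)
    (lam : Fin ρ → ℂ) (mu : Fin ν → ℂ)
    (hlam : Function.Injective lam) (hmu : Function.Injective mu)
    (hne : ∀ j i, mu j ≠ lam i)
    (hlamU : ∀ i, IsUnit (lam i • E - A)) (hmuU : ∀ j, IsUnit (mu j • E - A))
    (w : Fin ρ → ℂ) (v : Fin ν → ℂ)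
    (hw : ∀ i, w i = (C * (lam i • E - A)⁻¹ * B) 0 0)
    (hv : ∀ j, v j = (C * (mu j • E - A)⁻¹ * B) 0 0)
    (R : Matrix (Fin n) (Fin ρ) ℂ) (O : Matrix (Fin ν) (Fin n) ℂ)
    (hR : ∀ k i, R k i = ((lam i • E - A)⁻¹ * B) k 0)
    (hO : ∀ j k, O j k = (C * (mu j • E - A)⁻¹) 0 k)
    (L : Matrix (Fin ν) (Fin ρ) ℂ)
    (hL : ∀ j i, L j i = (v j - w i) / (mu j - lam i)) :
    L = -(O * E * R) := by
  ext j i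
  set M := mu j • E - A with hM
  set N := lam i • E - A with hN
  have hMu : IsUnit M := hmuU j
  have hNu : IsUnit N := hlamU i
  have hMd : IsUnit M.det := (isUnit_iff_isUnit_det M).mp hMu
  have hNd : IsUnit N.det := (isUnit_iff_isUnit_det N).mp hNu
  have key : M⁻¹ - N⁻¹ = (lam i - mu j) • (M⁻¹ * E * N⁻¹) := by
    have h1 : M⁻¹ * (N - M) * N⁻¹ = M⁻¹ - N⁻¹ := by
      rw [Matrix.mul_sub, Matrix.sub_mul, Matrix.mul_assoc M⁻¹ N N⁻¹,
        Matrix.mul_nonsing_inv N hNd, Matrix.mul_one,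
        Matrix.nonsing_inv_mul M hMd, Matrix.one_mul]
    have h2 : N - M = (lam i - mu j) • E := by
      rw [hM, hN]
      rw [sub_smul]
      abel
    rw [← h1, h2]
    rw [Matrix.mul_smul, Matrix.smul_mul]
  have h1 : ∀ l, (O * E) j l = (C * M⁻¹ * E) 0 l := fun l => by
    rw [mul_apply, mul_apply]
    exact Finset.sum_congr rfl fun k _ => by rw [hO]
  have hX : (O * E * R) j i = (C * M⁻¹ * E * (N⁻¹ * B)) 0 0 := by
    rw [mul_apply, mul_apply]
    exact Finset.sum_congr rfl fun l _ => by rw [h1, hR]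
  have hnum : v j - w i = (lam i - mu j) * ((C * M⁻¹ * E * (N⁻¹ * B)) 0 0) := by
    rw [hv, hw, ← hM, ← hN]
    have h3 : C * M⁻¹ * B - C * N⁻¹ * B = (lam i - mu j) • (C * M⁻¹ * E * (N⁻¹ * B)) := by
      rw [← Matrix.sub_mul, ← Matrix.mul_sub, key, Matrix.mul_smul, Matrix.smul_mul]
      simp [Matrix.mul_assoc]
    have h4 := congrArg (fun X : Matrix (Fin 1) (Fin 1) ℂ => X 0 0) h3
    simpa [Matrix.sub_apply, Matrix.smul_apply] using h4
  rw [hL, hnum, Matrix.neg_apply, hX]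
  have hd : mu j - lam i ≠ 0 := sub_ne_zero.mpr (hne j i)
  field_simp
  ring
end

section
/- With the same setup as before (H(s) = C(sE-A)^{-1}B, points λ_i, μ_j, values w_i = H(λ_i), v_j = H(μ_j), generalized reachability matrix R and observability matrix O), the shifted Loewner matrix L_σ with entries (L_σ)_{ji} = (μ_j v_j - λ_i w_i)/(μ_j - λ_i) satisfies L_σ = -O A R. -/
open Matrix

/-!
With `P = (μE - A)⁻¹` and `Q = (λE - A)⁻¹`, the splitting `(μ - λ) A = λ (μE - A) - μ (λE - A)`
gives the resolvent identity `(μ - λ) P A Q = λ Q - μ P`. Sandwiched between `C` and `B` it reads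
`(μ - λ) C P A Q B = λ H(λ) - μ H(μ)`, and `C P A Q B` is exactly the `(j, i)` entry of `O A R`.
-/

section Resolvent

variable {m K : Type*} [Fintype m] [DecidableEq m] [CommRing K]

theorem sub_smul_inv_mul_mul_inv (E A : Matrix m m K) {mu lam : K}
    (hmu : IsUnit (mu • E - A)) (hlam : IsUnit (lam • E - A)) :
    (mu - lam) • ((mu • E - A)⁻¹ * A * (lam • E - A)⁻¹) =
      lam • (lam • E - A)⁻¹ - mu • (mu • E - A)⁻¹ := by
  have hP : (mu • E - A)⁻¹ * (mu • E - A) = 1 :=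
    nonsing_inv_mul _ ((isUnit_iff_isUnit_det _).mp hmu)
  have hQ : (lam • E - A) * (lam • E - A)⁻¹ = 1 :=
    mul_nonsing_inv _ ((isUnit_iff_isUnit_det _).mp hlam)
  have hA : (mu - lam) • A = lam • (mu • E - A) - mu • (lam • E - A) := by module
  calc (mu - lam) • ((mu • E - A)⁻¹ * A * (lam • E - A)⁻¹)
      = (mu • E - A)⁻¹ * ((mu - lam) • A) * (lam • E - A)⁻¹ := by
        rw [Matrix.mul_smul, Matrix.smul_mul]
    _ = lam • ((mu • E - A)⁻¹ * (mu • E - A) * (lam • E - A)⁻¹)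
          - mu • ((mu • E - A)⁻¹ * ((lam • E - A) * (lam • E - A)⁻¹)) := by
        rw [hA]
        simp only [Matrix.mul_sub, Matrix.sub_mul, Matrix.mul_smul, Matrix.smul_mul,
          Matrix.mul_assoc]
    _ = lam • (lam • E - A)⁻¹ - mu • (mu • E - A)⁻¹ := by
        rw [hP, hQ, Matrix.one_mul, Matrix.mul_one]

theorem sub_mul_transfer_entry {ι κ : Type*} (E A : Matrix m m K)
    (C : Matrix ι m K) (B : Matrix m κ K) {mu lam : K}
    (hmu : IsUnit (mu • E - A)) (hlam : IsUnit (lam • E - A)) (a : ι) (b : κ) :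
    (mu - lam) * (C * (mu • E - A)⁻¹ * A * ((lam • E - A)⁻¹ * B)) a b =
      lam * (C * (lam • E - A)⁻¹ * B) a b - mu * (C * (mu • E - A)⁻¹ * B) a b := by
  have h := congrArg (fun X => (C * X * B) a b) (sub_smul_inv_mul_mul_inv E A hmu hlam)
  simpa only [Matrix.mul_smul, Matrix.smul_mul, Matrix.mul_sub, Matrix.sub_mul,
    Matrix.mul_assoc, Matrix.smul_apply, Matrix.sub_apply, smul_eq_mul] using h

end Resolvent

theorem shifted_loewner_factorization_general (n ρ ν : ℕ)
    (E A : Matrix (Fin n) (Fin n) ℂ)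
    (B : Matrix (Fin n) (Fin 1) ℂ) (C : Matrix (Fin 1) (Fin n) ℂ)
    (lam : Fin ρ → ℂ) (mu : Fin ν → ℂ)
    (hne : ∀ j i, mu j ≠ lam i)
    (hlamU : ∀ i, IsUnit (lam i • E - A)) (hmuU : ∀ j, IsUnit (mu j • E - A))
    (w : Fin ρ → ℂ) (v : Fin ν → ℂ)
    (hw : ∀ i, w i = (C * (lam i • E - A)⁻¹ * B) 0 0)
    (hv : ∀ j, v j = (C * (mu j • E - A)⁻¹ * B) 0 0)
    (R : Matrix (Fin n) (Fin ρ) ℂ) (O : Matrix (Fin ν) (Fin n) ℂ)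
    (hR : ∀ k i, R k i = ((lam i • E - A)⁻¹ * B) k 0)
    (hO : ∀ j k, O j k = (C * (mu j • E - A)⁻¹) 0 k)
    (Ls : Matrix (Fin ν) (Fin ρ) ℂ)
    (hLs : ∀ j i, Ls j i = (mu j * v j - lam i * w i) / (mu j - lam i)) :
    Ls = -(O * A * R) := by
  ext j i
  have hentry : (O * A * R) j i =
      (C * (mu j • E - A)⁻¹ * A * ((lam i • E - A)⁻¹ * B)) 0 0 := by
    simp only [mul_apply, hO, hR, Finset.mul_sum, Finset.sum_mul]
  have hkey := sub_mul_transfer_entry E A C B (hmuU j) (hlamU i) 0 0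
  rw [← hw, ← hv, ← hentry] at hkey
  rw [hLs, neg_apply, div_eq_iff (sub_ne_zero.mpr (hne j i))]
  linear_combination hkey

/-- Shifted Loewner matrix factorization: `Lσ = -O * A * R`. -/
theorem shifted_loewner_factorization (n ρ ν : ℕ)
    (E A : Matrix (Fin n) (Fin n) ℂ)
    (B : Matrix (Fin n) (Fin 1) ℂ) (C : Matrix (Fin 1) (Fin n) ℂ)
    (lam : Fin ρ → ℂ) (mu : Fin ν → ℂ)
    (hlam : Function.Injective lam) (hmu : Function.Injective mu)
    (hne : ∀ j i, mu j ≠ lam i)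
    (hlamU : ∀ i, IsUnit (lam i • E - A)) (hmuU : ∀ j, IsUnit (mu j • E - A))
    (w : Fin ρ → ℂ) (v : Fin ν → ℂ)
    (hw : ∀ i, w i = (C * (lam i • E - A)⁻¹ * B) 0 0)
    (hv : ∀ j, v j = (C * (mu j • E - A)⁻¹ * B) 0 0)
    (R : Matrix (Fin n) (Fin ρ) ℂ) (O : Matrix (Fin ν) (Fin n) ℂ)
    (hR : ∀ k i, R k i = ((lam i • E - A)⁻¹ * B) k 0)
    (hO : ∀ j k, O j k = (C * (mu j • E - A)⁻¹) 0 k)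
    (Ls : Matrix (Fin ν) (Fin ρ) ℂ)
    (hLs : ∀ j i, Ls j i = (mu j * v j - lam i * w i) / (mu j - lam i)) :
    Ls = -(O * A * R) :=
  shifted_loewner_factorization_general n ρ ν E A B C lam mu hne hlamU hmuU w v hw hv R O hR hO Ls
    hLs
end

section
/- Suppose the pencil (L, L_σ) is regular (i.e., zL - L_σ is invertible for z = λ_i and z = μ_j, all interpolation points). Then the realization (Ẽ, Ã, B̃, C̃) = (−L, −L_σ, V, W) interpolates the data: the transfer function H̃(z) = W (L_σ − z L)^{-1} V satisfies H̃(λ_i) = w_i for every right point λ_i and H̃(μ_j) = v_j for every left point μ_j, where the data comes from samples of a rational function as above. -/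
open Matrix

/-- If the Loewner pencil is regular at the interpolation points, the Loewner
realization `(-L, -Lσ, V, W)` interpolates the data:
`H̃(z) = W (Lσ - z L)⁻¹ V` satisfies `H̃(λᵢ) = wᵢ` and `H̃(μⱼ) = vⱼ`. -/
theorem loewner_realization_interpolates (n k : ℕ)
    (E A : Matrix (Fin n) (Fin n) ℂ)
    (B : Matrix (Fin n) (Fin 1) ℂ) (C : Matrix (Fin 1) (Fin n) ℂ)
    (lam mu : Fin k → ℂ)
    (hdist : ∀ i j, lam i ≠ mu j)
    (hlam : Function.Injective lam) (hmu : Function.Injective mu)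
    (hlamU : ∀ i, IsUnit (lam i • E - A)) (hmuU : ∀ j, IsUnit (mu j • E - A))
    (w v : Fin k → ℂ)
    (hw : ∀ i, w i = (C * (lam i • E - A)⁻¹ * B) 0 0)
    (hv : ∀ j, v j = (C * (mu j • E - A)⁻¹ * B) 0 0)
    (L Ls : Matrix (Fin k) (Fin k) ℂ)
    (hL : ∀ j i, L j i = (v j - w i) / (mu j - lam i))
    (hLs : ∀ j i, Ls j i = (mu j * v j - lam i * w i) / (mu j - lam i))
    (V : Matrix (Fin k) (Fin 1) ℂ) (W : Matrix (Fin 1) (Fin k) ℂ)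
    (hV : ∀ j, V j 0 = v j) (hW : ∀ i, W 0 i = w i)
    (hreg : ∀ i, IsUnit (lam i • L - Ls) ∧ IsUnit (mu i • L - Ls)) :
    (∀ i, (W * (Ls - lam i • L)⁻¹ * V) 0 0 = w i) ∧
    (∀ j, (W * (Ls - mu j • L)⁻¹ * V) 0 0 = v j) := by
  constructor
  · intro i
    set M : Matrix (Fin k) (Fin k) ℂ := Ls - lam i • L with hM
    have hU : IsUnit M := by
      have := (hreg i).1.neg
      simpa [hM, neg_sub] using this
    have hUdet : IsUnit M.det := (Matrix.isUnit_iff_isUnit_det M).mp hU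
    set x : Matrix (Fin k) (Fin 1) ℂ := Matrix.of fun j _ => if j = i then 1 else 0 with hx
    have hMx : M * x = V := by
      ext j o
      have hne : mu j - lam i ≠ 0 := sub_ne_zero.mpr (Ne.symm (hdist i j))
      have : ∑ p, M j p * x p o = M j i := by
        rw [Finset.sum_eq_single i]
        · simp [hx]
        · intro b _ hb; simp [hx, hb]
        · simp
      rw [Matrix.mul_apply, this, hM]
      simp only [Matrix.sub_apply, Matrix.smul_apply, smul_eq_mul, hL, hLs]
      rw [Fin.eq_zero o, hV]
      field_simp
      ring
    have hinv : M⁻¹ * V = x := by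
      rw [← hMx, ← Matrix.mul_assoc, Matrix.nonsing_inv_mul M hUdet, Matrix.one_mul]
    rw [Matrix.mul_assoc, hinv, Matrix.mul_apply]
    rw [Finset.sum_eq_single i]
    · simp [hx, hW]
    · intro b _ hb; simp [hx, hb]
    · simp
  · intro j
    set M : Matrix (Fin k) (Fin k) ℂ := Ls - mu j • L with hM
    have hU : IsUnit M := by
      have := (hreg j).2.neg
      simpa [hM, neg_sub] using this
    have hUdet : IsUnit M.det := (Matrix.isUnit_iff_isUnit_det M).mp hU
    set y : Matrix (Fin 1) (Fin k) ℂ := Matrix.of fun _ p => if p = j then 1 else 0 with hy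
    have hyM : y * M = W := by
      ext o i
      have hne : mu j - lam i ≠ 0 := sub_ne_zero.mpr (Ne.symm (hdist i j))
      have : ∑ p, y o p * M p i = M j i := by
        rw [Finset.sum_eq_single j]
        · simp [hy]
        · intro b _ hb; simp [hy, hb]
        · simp
      rw [Matrix.mul_apply, this, hM]
      simp only [Matrix.sub_apply, Matrix.smul_apply, smul_eq_mul, hL, hLs]
      rw [Fin.eq_zero o, hW]
      field_simp
      ring
    have hinv : W * M⁻¹ = y := by
      rw [← hyM, Matrix.mul_assoc, Matrix.mul_nonsing_inv M hUdet, Matrix.mul_one]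
    rw [hinv, Matrix.mul_apply]
    rw [Finset.sum_eq_single j]
    · simp [hy, hV]
    · intro b _ hb; simp [hy, hb]
    · simp
end
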